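/- arXiv:1707.06138 — 3 statements merged into one kernel-verified Lean document; each statement's English description precedes it below -/
import Mathlib

section
/- Suppose t ≤ t^0 where t^0 = T1 - (1/r)·log((L2-K)/(L1-K)) ≥ 0. Then for every stopping time τ with t ≤ τ ≤ T2, the expected discounted payoff E_t[e^{-r(τ-t)}((L1∧S_τ - K)·1_{τ<T1} + (L2∧S_τ - K)·1_{τ≥T1})] is at most L1 - K. Consequently, if S_t ≥ L1, immediate exercise is optimal. -/
open MeasureTheory

/-- If `t ≤ t0` where `t0 = T1 - (1/r)·log((L2-K)/(L1-K)) ≥ 0`, then for every stopping rule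
`τ` with `t ≤ τ ≤ T2` the expected discounted payoff of the two-level capped option is at most
`L1 - K`; consequently, if immediate exercise (paying `L1 - K`, which is attained when
`S_t ≥ L1`) is among the admissible payoffs, then `L1 - K` is the optimal value. -/
theorem payoff_dominated_before_t0 {Ω : Type*} [MeasurableSpace Ω] (μ : Measure Ω)
    [IsProbabilityMeasure μ]
    (r K L1 L2 T1 T2 t t0 : ℝ) (hr : 0 < r) (hK : K < L1) (h12 : L1 < L2)
    (hT1 : 0 < T1) (hT12 : T1 < T2)
    (ht0 : t0 = T1 - (1 / r) * Real.log ((L2 - K) / (L1 - K)))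
    (ht0nn : 0 ≤ t0) (ht : t ≤ t0) :
    (∀ τ S : Ω → ℝ, (∀ ω, t ≤ τ ω ∧ τ ω ≤ T2) →
      Integrable (fun ω => Real.exp (-r * (τ ω - t)) *
        (if τ ω < T1 then min L1 (S ω) - K else min L2 (S ω) - K)) μ →
      ∫ ω, Real.exp (-r * (τ ω - t)) *
        (if τ ω < T1 then min L1 (S ω) - K else min L2 (S ω) - K) ∂μ ≤ L1 - K) ∧
    (∀ A : Set ℝ, (L1 - K) ∈ A →
      (∀ a ∈ A, ∃ τ S : Ω → ℝ, (∀ ω, t ≤ τ ω ∧ τ ω ≤ T2) ∧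
        Integrable (fun ω => Real.exp (-r * (τ ω - t)) *
          (if τ ω < T1 then min L1 (S ω) - K else min L2 (S ω) - K)) μ ∧
        a = ∫ ω, Real.exp (-r * (τ ω - t)) *
          (if τ ω < T1 then min L1 (S ω) - K else min L2 (S ω) - K) ∂μ) →
      IsGreatest A (L1 - K)) := by
  have hL1K : (0:ℝ) < L1 - K := by linarith
  have hL2K : (0:ℝ) < L2 - K := by linarith
  have hratio : (0:ℝ) < (L2 - K) / (L1 - K) := div_pos hL2K hL1K
  have key : ∀ τ S : Ω → ℝ, (∀ ω, t ≤ τ ω ∧ τ ω ≤ T2) →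
      Integrable (fun ω => Real.exp (-r * (τ ω - t)) *
        (if τ ω < T1 then min L1 (S ω) - K else min L2 (S ω) - K)) μ →
      ∫ ω, Real.exp (-r * (τ ω - t)) *
        (if τ ω < T1 then min L1 (S ω) - K else min L2 (S ω) - K) ∂μ ≤ L1 - K := by
    intro τ S hτ hInt
    have hbound : ∀ ω, Real.exp (-r * (τ ω - t)) *
        (if τ ω < T1 then min L1 (S ω) - K else min L2 (S ω) - K) ≤ L1 - K := by
      intro ω
      obtain ⟨h1, _⟩ := hτ ω
      have hexp_pos : (0:ℝ) < Real.exp (-r * (τ ω - t)) := Real.exp_pos _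
      by_cases hc : τ ω < T1
      · simp only [hc, if_true]
        have hmin : min L1 (S ω) - K ≤ L1 - K := by
          have := min_le_left L1 (S ω); linarith
        have hexp1 : Real.exp (-r * (τ ω - t)) ≤ 1 := by
          apply Real.exp_le_one_iff.mpr
          nlinarith
        calc Real.exp (-r * (τ ω - t)) * (min L1 (S ω) - K)
            ≤ Real.exp (-r * (τ ω - t)) * (L1 - K) :=
              mul_le_mul_of_nonneg_left hmin hexp_pos.le
          _ ≤ 1 * (L1 - K) := mul_le_mul_of_nonneg_right hexp1 hL1K.le
          _ = L1 - K := one_mul _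
      · simp only [hc, if_false]
        push_neg at hc
        have hlog : Real.log ((L2 - K) / (L1 - K)) ≤ r * (τ ω - t) := by
          have h1' : t ≤ T1 - (1 / r) * Real.log ((L2 - K) / (L1 - K)) := by
            rw [← ht0]; exact ht
          have : (1 / r) * Real.log ((L2 - K) / (L1 - K)) ≤ τ ω - t := by linarith
          have := mul_le_mul_of_nonneg_left this hr.le
          rw [← mul_assoc] at this
          field_simp at this
          linarith [this]
        have hexp2 : Real.exp (-r * (τ ω - t)) ≤ (L1 - K) / (L2 - K) := by
          have : Real.exp (-r * (τ ω - t)) ≤ Real.exp (-Real.log ((L2 - K) / (L1 - K))) := by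
            apply Real.exp_le_exp.mpr; linarith
          rw [Real.exp_neg, Real.exp_log hratio, inv_div] at this; exact this
        have hmin : min L2 (S ω) - K ≤ L2 - K := by
          have := min_le_left L2 (S ω); linarith
        calc Real.exp (-r * (τ ω - t)) * (min L2 (S ω) - K)
            ≤ Real.exp (-r * (τ ω - t)) * (L2 - K) :=
              mul_le_mul_of_nonneg_left hmin hexp_pos.le
          _ ≤ (L1 - K) / (L2 - K) * (L2 - K) := mul_le_mul_of_nonneg_right hexp2 hL2K.le
          _ = L1 - K := div_mul_cancel₀ _ hL2K.ne'
    calc ∫ ω, Real.exp (-r * (τ ω - t)) *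
        (if τ ω < T1 then min L1 (S ω) - K else min L2 (S ω) - K) ∂μ
        ≤ ∫ _ω, (L1 - K) ∂μ :=
          integral_mono hInt (integrable_const _) hbound
      _ = L1 - K := by simp
  refine ⟨key, ?_⟩
  intro A hmem hrep
  refine ⟨hmem, ?_⟩
  intro a ha
  obtain ⟨τ, S, h1, h2, h3⟩ := hrep a ha
  rw [h3]
  exact key τ S h1 h2
end

section
/- If S > B^w(t), i.e., C^w(S,t) > L1 - K, then immediate exercise of the two-level capped option at (S,t) is strictly suboptimal: C^{A,L}(S,t) > (S∧L1 - K)^+. -/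
/-- If `S > B^w(t)`, i.e. `C^w(S,t) > L1 - K`, then immediate exercise of the two-level capped
option at `(S,t)` is strictly suboptimal: `C^{A,L}(S,t) > (S∧L1 - K)^+`. Uses `C^{A,L} ≥ C^w`
and that the immediate payoff before `T1` never exceeds `L1-K`. -/
theorem immediate_exercise_suboptimal (CAL Cw : ℝ → ℝ → ℝ) (K L1 T1 : ℝ) (hK : K < L1)
    (hdom : ∀ S t, t < T1 → Cw S t ≤ CAL S t)
    (S t : ℝ) (ht : t < T1) (h : L1 - K < Cw S t) :
    max (min S L1 - K) 0 < CAL S t := by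
  have h1 : max (min S L1 - K) 0 ≤ L1 - K := by
    apply max_le <;> [skip; linarith]
    linarith [min_le_right S L1]
  calc max (min S L1 - K) 0 ≤ L1 - K := h1
    _ < Cw S t := h
    _ ≤ CAL S t := hdom S t ht
end

section
/- At the intermediate time T1 in the case L1 > L2 (left-continuous cap), the option value satisfies C^{A,L}(S,T1) = (S∧L1-K)·1_{{S ≥ L2∧B(T1)}} + C^{A,L2}(S,T1)·1_{{S < L2∧B(T1)}}, i.e., immediate exercise at T1 is optimal precisely when S ≥ L2∧B(T1). -/
theorem max_eq_ite_of_le_of_le {α : Type*} [LinearOrder α] {p : Prop} [Decidable p] {a b : α}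
    (hp : p → b ≤ a) (hnp : ¬p → a ≤ b) : max a b = if p then a else b := by
  split_ifs with h
  exacts [max_eq_left (hp h), max_eq_right (hnp h)]

theorem value_at_T1_decreasing_cap_general (CALT1 CAL2 : ℝ → ℝ) (BT1 K L1 L2 : ℝ)
    (h21 : L2 < L1)
    (hmax : ∀ S, 0 < S → CALT1 S = max (min S L1 - K) (CAL2 S))
    (hex : ∀ S, min L2 BT1 ≤ S → CAL2 S = min S L2 - K)
    (hcont : ∀ S, 0 < S → S < min L2 BT1 → S - K < CAL2 S) :
    ∀ S, 0 < S →
      CALT1 S = if min L2 BT1 ≤ S then min S L1 - K else CAL2 S := by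
  intro S hS
  rw [hmax S hS]
  refine max_eq_ite_of_le_of_le (fun hexercise => ?_) (fun hcontinue => ?_)
  · rw [hex S hexercise]
    gcongr
  · replace hcontinue := not_le.mp hcontinue
    have hSL2 : S < L2 := hcontinue.trans_le (min_le_left _ _)
    rw [min_eq_left (hSL2.trans h21).le]
    exact (hcont S hS hcontinue).le

/-- At the intermediate date `T1` in the case `L1 > L2` (left-continuous cap), with
`C^{A,L}(S,T1) = max(S∧L1-K, C^{A,L2}(S,T1))`, where the constant-cap value `C^{A,L2}(·,T1)`
equals `S∧L2-K` for `S ≥ B(T1)∧L2` and strictly exceeds `S-K` for `S < B(T1)∧L2`, one has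
`C^{A,L}(S,T1) = (S∧L1-K)·1_{S ≥ L2∧B(T1)} + C^{A,L2}(S,T1)·1_{S < L2∧B(T1)}`:
immediate exercise at `T1` is optimal precisely when `S ≥ L2∧B(T1)`. -/
theorem value_at_T1_decreasing_cap (CALT1 CAL2 : ℝ → ℝ) (BT1 K L1 L2 : ℝ)
    (hK : K < L2) (h21 : L2 < L1)
    (hmax : ∀ S, 0 < S → CALT1 S = max (min S L1 - K) (CAL2 S))
    (hex : ∀ S, min L2 BT1 ≤ S → CAL2 S = min S L2 - K)
    (hcont : ∀ S, 0 < S → S < min L2 BT1 → S - K < CAL2 S) :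
    ∀ S, 0 < S →
      CALT1 S = if min L2 BT1 ≤ S then min S L1 - K else CAL2 S :=
  value_at_T1_decreasing_cap_general CALT1 CAL2 BT1 K L1 L2 h21 hmax hex hcont
end
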